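/- arXiv:1111.5989 — 2 statements merged into one kernel-verified Lean document; each statement's English description precedes it below -/
import Mathlib

section
/- In the uniform-kernel setting, under assumption (A3), if λ1 > 0 and either λ2/λ1 > v_1(x) or λ2/λ1 < v_0(x), then sup_{t1,t2 ∈ ℝ} {λ1 t1 + λ2 t2 − ∫ (e^{t1+t2 l(v)} − 1) f_v(x) g(v) dv} = ∞. -/
set_option autoImplicit false

open MeasureTheory Filter Set

open ProbabilityTheory Real

/-!
Let `μ` be the measure `f g dv` and `M` the moment generating function of `l` under `μ`, so that
`V = (log M)'`. The integral in the objective is `exp t₁ * M t₂ - μ(ℝ)`; choosing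
`t₁ = -log M t₂` turns the objective into `μ(ℝ) - 1 - λ₁ (log M t₂ - r t₂)` with `r = λ₂ / λ₁`.
If `r` lies strictly above `sup V` (resp. below `inf V`), the function `log M t - r t` has
derivative bounded away from `0` with a fixed sign, hence tends to `-∞` as `t → ∞`
(resp. `t → -∞`), and the objective is unbounded.
-/

section WithDensityOfReal

variable {α : Type*} [MeasurableSpace α] {μ : Measure α} {w : α → ℝ}

lemma integral_withDensity_ofReal (hw : 0 ≤ w) (hw_meas : AEMeasurable w μ) (F : α → ℝ) :
    ∫ x, F x ∂μ.withDensity (fun x => ENNReal.ofReal (w x)) = ∫ x, F x * w x ∂μ := by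
  rw [integral_withDensity_eq_integral_toReal_smul₀ hw_meas.ennreal_ofReal
    (ae_of_all _ fun _ => ENNReal.ofReal_lt_top)]
  simp_rw [ENNReal.toReal_ofReal (hw _), smul_eq_mul, mul_comm]

lemma integrable_withDensity_ofReal_iff (hw : 0 ≤ w) (hw_meas : AEMeasurable w μ) {F : α → ℝ} :
    Integrable F (μ.withDensity fun x => ENNReal.ofReal (w x)) ↔
      Integrable (fun x => F x * w x) μ := by
  rw [integrable_withDensity_iff_integrable_smul₀' hw_meas.ennreal_ofReal
    (ae_of_all _ fun _ => ENNReal.ofReal_lt_top)]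
  simp_rw [ENNReal.toReal_ofReal (hw _), smul_eq_mul, mul_comm]

end WithDensityOfReal

section SlopeOutsideDerivativeRange

variable {φ φ' : ℝ → ℝ} {r : ℝ}

lemma tendsto_sub_mul_atTop_atBot_of_iSup_deriv_lt (hφ : ∀ t, HasDerivAt φ (φ' t) t)
    (hr : ⨆ t, (φ' t : EReal) < r) : Tendsto (fun t => φ t - r * t) atTop atBot := by
  obtain ⟨c, hc_sup, hcr⟩ := EReal.lt_iff_exists_real_btwn.mp hr
  have hφ'c : ∀ t, φ' t ≤ c := fun t =>
    EReal.coe_le_coe_iff.mp ((le_iSup (fun t => (φ' t : EReal)) t).trans hc_sup.le)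
  have hcr : c < r := EReal.coe_lt_coe_iff.mp hcr
  have hanti : Antitone fun t => φ t - c * t :=
    antitone_of_hasDerivAt_nonpos (fun t => (hφ t).sub ((hasDerivAt_id t).const_mul c))
      fun t => by simpa using hφ'c t
  have hlin : Tendsto (fun t => φ 0 + (c - r) * t) atTop atBot :=
    tendsto_atBot_add_const_left _ _ (tendsto_id.const_mul_atTop_of_neg (by linarith))
  refine tendsto_atBot_mono' _ ?_ hlin
  filter_upwards [eventually_ge_atTop 0] with t ht
  have := hanti ht
  simp only [mul_zero, sub_zero] at this
  linarith

lemma tendsto_sub_mul_atBot_atBot_of_lt_iInf_deriv (hφ : ∀ t, HasDerivAt φ (φ' t) t)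
    (hr : (r : EReal) < ⨅ t, (φ' t : EReal)) : Tendsto (fun t => φ t - r * t) atBot atBot := by
  obtain ⟨c, hrc, hc_inf⟩ := EReal.lt_iff_exists_real_btwn.mp hr
  have hcφ' : ∀ t, c ≤ φ' t := fun t =>
    EReal.coe_le_coe_iff.mp (hc_inf.le.trans (iInf_le (fun t => (φ' t : EReal)) t))
  have hrc : r < c := EReal.coe_lt_coe_iff.mp hrc
  have hmono : Monotone fun t => φ t - c * t :=
    monotone_of_hasDerivAt_nonneg (fun t => (hφ t).sub ((hasDerivAt_id t).const_mul c))
      fun t => by simpa using hcφ' t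
  have hlin : Tendsto (fun t => φ 0 + (c - r) * t) atBot atBot :=
    tendsto_atBot_add_const_left _ _ (tendsto_id.const_mul_atBot (by linarith))
  refine tendsto_atBot_mono' _ ?_ hlin
  filter_upwards [eventually_le_atBot 0] with t ht
  have := hmono ht
  simp only [mul_zero, sub_zero] at this
  linarith

lemma exists_sub_mul_lt_of_iSup_deriv_lt_or_lt_iInf_deriv (hφ : ∀ t, HasDerivAt φ (φ' t) t)
    (hr : ⨆ t, (φ' t : EReal) < r ∨ (r : EReal) < ⨅ t, (φ' t : EReal)) (M : ℝ) :
    ∃ t, φ t - r * t < M := by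
  rcases hr with hr | hr
  · exact ((tendsto_sub_mul_atTop_atBot_of_iSup_deriv_lt hφ hr).eventually_lt_atBot M).exists
  · exact ((tendsto_sub_mul_atBot_atBot_of_lt_iInf_deriv hφ hr).eventually_lt_atBot M).exists

end SlopeOutsideDerivativeRange

section ExponentialTilting

variable {Ω : Type*} {m : MeasurableSpace Ω} {X : Ω → ℝ} {μ : Measure Ω}

lemma hasDerivAt_cgf_of_integrable_exp_mul (hX : ∀ t, Integrable (fun ω => exp (t * X ω)) μ)
    (t : ℝ) : HasDerivAt (cgf X μ) (μ[fun ω => X ω * exp (t * X ω)] / mgf X μ t) t := by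
  have ht : t ∈ interior (integrableExpSet X μ) := by
    simp [eq_univ_of_forall (s := integrableExpSet X μ) hX]
  rw [← deriv_cgf ht]
  exact (analyticAt_cgf ht).differentiableAt.hasDerivAt

lemma integral_exp_add_mul_sub_one (hX : ∀ t, Integrable (fun ω => exp (t * X ω)) μ)
    (a b : ℝ) : ∫ ω, (exp (a + b * X ω) - 1) ∂μ = exp a * mgf X μ b - μ.real univ := by
  have h1 : Integrable (fun _ => (1 : ℝ)) μ := by simpa using hX 0
  simp_rw [exp_add]
  rw [integral_sub ((hX b).const_mul _) h1, integral_const_mul]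
  simp [mgf]

lemma iSup_linear_sub_integral_exp_eq_top (hμ : μ ≠ 0)
    (hX : ∀ t, Integrable (fun ω => exp (t * X ω)) μ) {lam₁ lam₂ : ℝ} (hlam₁ : 0 < lam₁)
    (hcgf : ∀ M, ∃ t, cgf X μ t - lam₂ / lam₁ * t < M) :
    ⨆ t : ℝ × ℝ, ((lam₁ * t.1 + lam₂ * t.2 - ∫ ω, (exp (t.1 + t.2 * X ω) - 1) ∂μ : ℝ) : EReal)
      = ⊤ := by
  refine iSup_eq_top.mpr fun b hb => ?_
  obtain ⟨M, hbM, -⟩ := EReal.lt_iff_exists_real_btwn.mp hb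
  obtain ⟨s, hs⟩ := hcgf ((μ.real univ - 1 - M) / lam₁)
  refine ⟨(-cgf X μ s, s), hbM.trans (EReal.coe_lt_coe_iff.mpr ?_)⟩
  have hnorm : exp (-cgf X μ s) * mgf X μ s = 1 := by
    rw [exp_neg, cgf, exp_log (mgf_pos' hμ (hX s))]
    exact inv_mul_cancel₀ (mgf_pos' hμ (hX s)).ne'
  rw [integral_exp_add_mul_sub_one hX, hnorm]
  field_simp at hs
  linarith

end ExponentialTilting

theorem rate_function_infinite_outside_range_general
    (l : ℝ → ℝ)
    (g : ℝ → ℝ) (hg_nonneg : ∀ v, 0 ≤ g v)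
    (f : ℝ → ℝ) (hf_nonneg : ∀ v, 0 ≤ f v)
    (hfg_pos : 0 < ∫ v, f v * g v)
    -- (A3)
    (hA3ii : ∀ a : ℝ, Integrable (fun v => Real.exp (a * l v) * f v * g v))
    -- V_x and the bounds v₀(x), v₁(x)
    (V : ℝ → ℝ)
    (hV : ∀ t, V t = (∫ u, Real.exp (t * l u) * l u * f u * g u) /
      (∫ v, Real.exp (t * l v) * f v * g v))
    (v₀ v₁ : EReal) (hv₀ : v₀ = ⨅ t : ℝ, (V t : EReal)) (hv₁ : v₁ = ⨆ t : ℝ, (V t : EReal))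
    (lam₁ lam₂ : ℝ) (hlam₁ : 0 < lam₁)
    (hout : v₁ < ((lam₂ / lam₁ : ℝ) : EReal) ∨ ((lam₂ / lam₁ : ℝ) : EReal) < v₀) :
    (⨆ t : ℝ × ℝ, ((lam₁ * t.1 + lam₂ * t.2 -
      ∫ v, (Real.exp (t.1 + t.2 * l v) - 1) * f v * g v : ℝ) : EReal)) = ⊤ := by
  set μ := volume.withDensity fun v => ENNReal.ofReal (f v * g v)
  have hw : 0 ≤ fun v => f v * g v := fun v => mul_nonneg (hf_nonneg v) (hg_nonneg v)
  have hw_meas : AEMeasurable fun v => f v * g v := by simpa using (hA3ii 0).aemeasurable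
  have hμ_integral (F : ℝ → ℝ) : ∫ v, F v ∂μ = ∫ v, F v * (f v * g v) :=
    integral_withDensity_ofReal hw hw_meas F
  have hexp (t : ℝ) : Integrable (fun v => exp (t * l v)) μ :=
    (integrable_withDensity_ofReal_iff hw hw_meas).mpr (by simpa only [mul_assoc] using hA3ii t)
  have hμ : μ ≠ 0 := by
    rintro hμ
    have := hμ_integral fun _ => 1
    simp only [hμ, integral_zero_measure, one_mul] at this
    linarith
  have hV_deriv (t : ℝ) : HasDerivAt (cgf l μ) (V t) t := by
    convert hasDerivAt_cgf_of_integrable_exp_mul hexp t using 1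
    rw [hV, mgf, hμ_integral, hμ_integral]
    congr 1 <;> congr 1 <;> ext v <;> ring
  have hsup : (⨆ t : ℝ × ℝ, ((lam₁ * t.1 + lam₂ * t.2 -
      ∫ v, (Real.exp (t.1 + t.2 * l v) - 1) * f v * g v : ℝ) : EReal)) =
      ⨆ t : ℝ × ℝ,
        ((lam₁ * t.1 + lam₂ * t.2 - ∫ v, (exp (t.1 + t.2 * l v) - 1) ∂μ : ℝ) : EReal) := by
    simp only [hμ_integral, mul_assoc]
  rw [hsup]
  exact iSup_linear_sub_integral_exp_eq_top hμ hexp hlam₁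
    (exists_sub_mul_lt_of_iSup_deriv_lt_or_lt_iInf_deriv hV_deriv (hv₀ ▸ hv₁ ▸ hout))

theorem rate_function_infinite_outside_range
    (l : ℝ → ℝ) (hl : Measurable l)
    (g : ℝ → ℝ) (hg_nonneg : ∀ v, 0 ≤ g v) (hg_prob : ∫ v, g v = 1)
    (f : ℝ → ℝ) (hf_nonneg : ∀ v, 0 ≤ f v)
    (hfg_pos : 0 < ∫ v, f v * g v)
    -- (A3)
    (hA3i : ∀ a b : ℝ, Integrable (fun v => (Real.exp (a + b * l v) - 1) * f v * g v))
    (hA3ii : ∀ a : ℝ, Integrable (fun v => Real.exp (a * l v) * f v * g v))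
    (hA3iii : ∀ a : ℝ, Integrable (fun v => Real.exp (a * l v) * f v * g v * l v))
    (hA3iv : ∀ a : ℝ, Integrable (fun v => Real.exp (a * l v) * f v * g v * (l v) ^ 2))
    -- V_x and the bounds v₀(x), v₁(x)
    (V : ℝ → ℝ)
    (hV : ∀ t, V t = (∫ u, Real.exp (t * l u) * l u * f u * g u) /
      (∫ v, Real.exp (t * l v) * f v * g v))
    (v₀ v₁ : EReal) (hv₀ : v₀ = ⨅ t : ℝ, (V t : EReal)) (hv₁ : v₁ = ⨆ t : ℝ, (V t : EReal))
    (lam₁ lam₂ : ℝ) (hlam₁ : 0 < lam₁)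
    (hout : v₁ < ((lam₂ / lam₁ : ℝ) : EReal) ∨ ((lam₂ / lam₁ : ℝ) : EReal) < v₀) :
    (⨆ t : ℝ × ℝ, ((lam₁ * t.1 + lam₂ * t.2 -
      ∫ v, (Real.exp (t.1 + t.2 * l v) - 1) * f v * g v : ℝ) : EReal)) = ⊤ :=
  rate_function_infinite_outside_range_general l g hg_nonneg f hf_nonneg hfg_pos hA3ii V hV v₀ v₁
    hv₀ hv₁ lam₁ lam₂ hlam₁ hout
end

section
/- Suppose the kernel K : [0,∞) → ℝ is Lipschitz with constant M and satisfies K(t) ≥ K_0 > 0 for all t ≥ 0. Then, deterministically, for every c ∈ E, every ν > 0 and every n ≥ 1: sup_{x : d(x,c) ≤ ν} |r̂_n^l(x) − r̂_n^l(c)| ≤ (2 M ν/(K_0² n h)) Σ_{i=1}^n |l(Y_i)| K(d(c, X_i)/h). -/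
/-!
Write `r̂(x) = A(x) / B(x)` with weights `w_i(x) = K(d(x, X_i)/h) ≥ K₀`, so `B ≥ n K₀`. The reverse
triangle inequality for `d` and the Lipschitz bound on `K` give `|w_i(x) - w_i(c)| ≤ M ν / h`, and
`A(x)/B(x) - A(c)/B(c) = (A(x) - A(c))/B(x) + A(c) (B(c) - B(x))/(B(x) B(c))` splits the
oscillation into two terms, each at most `(M ν / (K₀² n h)) Σ |l(Y_i)| w_i(c)`.
-/

set_option autoImplicit false

open Finset

theorem abs_sub_le_of_symm_of_triangle {E : Type*} (d : E → E → ℝ)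
    (hd_symm : ∀ a b, d a b = d b a) (hd_tri : ∀ a b c, d a c ≤ d a b + d b c) (x c z : E) :
    |d x z - d c z| ≤ d x c := by
  rw [abs_sub_le_iff]
  constructor
  · linarith [hd_tri x c z]
  · linarith [hd_tri c x z, hd_symm c x]

theorem abs_div_sub_div_le {a a' b b' m α β S : ℝ} (hm : 0 < m) (hb : m ≤ b) (hb' : m ≤ b')
    (ha : |a - a'| ≤ α) (ha' : |a'| ≤ S) (hbb : |b - b'| ≤ β) :
    |a / b - a' / b'| ≤ α / m + S * β / m ^ 2 := by
  have hb0 : 0 < b := hm.trans_le hb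
  have hb'0 : 0 < b' := hm.trans_le hb'
  have split : a / b - a' / b' = (a - a') / b + a' * (b' - b) / (b * b') := by
    field_simp
    ring
  have hα : |a - a'| / b ≤ α / m :=
    div_le_div₀ ((abs_nonneg _).trans ha) ha hm hb
  have hbb' : |b' - b| ≤ β := by rwa [abs_sub_comm]
  have hS : |a'| * |b' - b| / (b * b') ≤ S * β / m ^ 2 := by
    rw [sq]
    exact div_le_div₀ (mul_nonneg ((abs_nonneg _).trans ha') ((abs_nonneg _).trans hbb))
      (mul_le_mul ha' hbb' (abs_nonneg _) ((abs_nonneg _).trans ha')) (mul_pos hm hm)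
      (mul_le_mul hb hb' hm.le hb0.le)
  calc |a / b - a' / b'|
      = |(a - a') / b + a' * (b' - b) / (b * b')| := by rw [split]
    _ ≤ |(a - a') / b| + |a' * (b' - b) / (b * b')| := abs_add_le _ _
    _ = |a - a'| / b + |a'| * |b' - b| / (b * b') := by
        rw [abs_div, abs_div, abs_mul, abs_mul, abs_of_pos hb0, abs_of_pos hb'0]
    _ ≤ α / m + S * β / m ^ 2 := add_le_add hα hS

section WeightedAverage

variable {ι : Type*} (s : Finset ι) (a w w' : ι → ℝ) {κ δ : ℝ}

theorem card_mul_le_sum_of_le (hw : ∀ i ∈ s, κ ≤ w i) : #s * κ ≤ ∑ i ∈ s, w i := by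
  simpa [nsmul_eq_mul] using Finset.card_nsmul_le_sum s w κ hw

theorem abs_weightedAvg_sub_le (hκ : 0 < κ) (hw : ∀ i ∈ s, κ ≤ w i) (hw' : ∀ i ∈ s, κ ≤ w' i)
    (hδ : ∀ i ∈ s, |w i - w' i| ≤ δ) :
    |(∑ i ∈ s, a i * w i) / ∑ i ∈ s, w i - (∑ i ∈ s, a i * w' i) / ∑ i ∈ s, w' i| ≤
      2 * δ / (κ ^ 2 * #s) * ∑ i ∈ s, |a i| * w' i := by
  rcases s.eq_empty_or_nonempty with rfl | ⟨j, hj⟩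
  · simp
  have hcard : (0 : ℝ) < #s := by exact_mod_cast card_pos.mpr ⟨j, hj⟩
  have hδ0 : 0 ≤ δ := (abs_nonneg _).trans (hδ j hj)
  have hnum : |∑ i ∈ s, a i * w i - ∑ i ∈ s, a i * w' i| ≤ δ / κ * ∑ i ∈ s, |a i| * w' i := by
    rw [← sum_sub_distrib, mul_sum]
    refine (abs_sum_le_sum_abs _ _).trans (sum_le_sum fun i hi => ?_)
    have hδκ : δ ≤ δ / κ * w' i :=
      calc δ = δ / κ * κ := (div_mul_cancel₀ _ hκ.ne').symm
        _ ≤ δ / κ * w' i := by gcongr; exact hw' i hi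
    calc |a i * w i - a i * w' i| = |a i| * |w i - w' i| := by rw [← mul_sub, abs_mul]
      _ ≤ |a i| * (δ / κ * w' i) := by gcongr; exact (hδ i hi).trans hδκ
      _ = δ / κ * (|a i| * w' i) := by ring
  have hnum' : |∑ i ∈ s, a i * w' i| ≤ ∑ i ∈ s, |a i| * w' i := by
    refine (abs_sum_le_sum_abs _ _).trans_eq (sum_congr rfl fun i hi => ?_)
    rw [abs_mul, abs_of_pos (hκ.trans_le (hw' i hi))]
  have hden : |∑ i ∈ s, w i - ∑ i ∈ s, w' i| ≤ #s * δ := by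
    rw [← sum_sub_distrib]
    simpa [nsmul_eq_mul] using (abs_sum_le_sum_abs _ _).trans (sum_le_card_nsmul s _ δ hδ)
  refine (abs_div_sub_div_le (mul_pos hcard hκ) (card_mul_le_sum_of_le s w hw)
    (card_mul_le_sum_of_le s w' hw') hnum hnum' hden).trans_eq ?_
  field_simp
  ring

end WeightedAverage

theorem deterministic_oscillation_bound_general
    {E : Type*} (d : E → E → ℝ)
    (hd_nonneg : ∀ a b, 0 ≤ d a b) (hd_symm : ∀ a b, d a b = d b a)
    (hd_tri : ∀ a b c, d a c ≤ d a b + d b c)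
    (K : ℝ → ℝ) (M : ℝ) (hK_lip : ∀ s t, |K s - K t| ≤ M * |s - t|)
    (K₀ : ℝ) (hK₀_pos : 0 < K₀) (hK₀ : ∀ t : ℝ, 0 ≤ t → K₀ ≤ K t)
    (l : ℝ → ℝ)
    (n : ℕ) (h : ℝ) (hh : 0 < h)
    (X : ℕ → E) (Y : ℕ → ℝ)
    (rhat : E → ℝ)
    (hrhat : ∀ x, rhat x =
      (∑ i ∈ Finset.range n, l (Y i) * K (d x (X i) / h)) /
      (∑ i ∈ Finset.range n, K (d x (X i) / h)))
    (c : E) (ν : ℝ) :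
    ∀ x, d x c ≤ ν →
      |rhat x - rhat c| ≤ (2 * M * ν / (K₀ ^ 2 * n * h)) *
        ∑ i ∈ Finset.range n, |l (Y i)| * K (d c (X i) / h) := by
  intro x hx
  have hM : 0 ≤ M := by
    simpa using (abs_nonneg _).trans (hK_lip 1 0)
  have hweight : ∀ i, |K (d x (X i) / h) - K (d c (X i) / h)| ≤ M * ν / h := fun i =>
    calc |K (d x (X i) / h) - K (d c (X i) / h)|
        ≤ M * |d x (X i) / h - d c (X i) / h| := hK_lip _ _
      _ = M * (|d x (X i) - d c (X i)| / h) := by rw [← sub_div, abs_div, abs_of_pos hh]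
      _ ≤ M * ν / h := by
          rw [mul_div_assoc]
          gcongr
          exact (abs_sub_le_of_symm_of_triangle d hd_symm hd_tri x c (X i)).trans hx
  rw [hrhat, hrhat]
  convert abs_weightedAvg_sub_le (range n) (fun i => l (Y i)) _ _ hK₀_pos
    (fun i _ => hK₀ _ (div_nonneg (hd_nonneg _ _) hh.le))
    (fun i _ => hK₀ _ (div_nonneg (hd_nonneg _ _) hh.le)) (fun i _ => hweight i) using 2
  rw [card_range]
  ring

theorem deterministic_oscillation_bound
    {E : Type*} (d : E → E → ℝ)
    (hd_nonneg : ∀ a b, 0 ≤ d a b) (hd_symm : ∀ a b, d a b = d b a)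
    (hd_tri : ∀ a b c, d a c ≤ d a b + d b c) (hd_refl : ∀ a, d a a = 0)
    (K : ℝ → ℝ) (M : ℝ) (hK_lip : ∀ s t, |K s - K t| ≤ M * |s - t|)
    (K₀ : ℝ) (hK₀_pos : 0 < K₀) (hK₀ : ∀ t : ℝ, 0 ≤ t → K₀ ≤ K t)
    (l : ℝ → ℝ)
    (n : ℕ) (hn : 1 ≤ n) (h : ℝ) (hh : 0 < h)
    (X : ℕ → E) (Y : ℕ → ℝ)
    (rhat : E → ℝ)
    (hrhat : ∀ x, rhat x =
      (∑ i ∈ Finset.range n, l (Y i) * K (d x (X i) / h)) /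
      (∑ i ∈ Finset.range n, K (d x (X i) / h)))
    (c : E) (ν : ℝ) (hν : 0 < ν) :
    ∀ x, d x c ≤ ν →
      |rhat x - rhat c| ≤ (2 * M * ν / (K₀ ^ 2 * n * h)) *
        ∑ i ∈ Finset.range n, |l (Y i)| * K (d c (X i) / h) :=
  deterministic_oscillation_bound_general d hd_nonneg hd_symm hd_tri K M hK_lip K₀ hK₀_pos hK₀ l n h
    hh X Y rhat hrhat c ν
end
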